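/- arXiv:1305.5988 — 4 statements merged into one kernel-verified Lean document; each statement's English description precedes it below -/
import Mathlib

section
/- Let μ1, μ2, μ3, μ4, μ5, μ6, λ1, λ2 ∈ ℝ satisfy λ1 = μ2 − μ3, λ2 = μ5 − μ6, and Parodi's relation μ2 + μ3 = μ6 − μ5. Let A be a real symmetric 2×2 matrix, Ω a real skew-symmetric 2×2 matrix, and d̂, N̂ ∈ ℝ². Define the 2×2 matrix σ with entries σ_{ij} = μ1 (d̂ᵀAd̂) d̂_i d̂_j + μ2 N̂_i d̂_j + μ3 N̂_j d̂_i + μ4 A_{ij} + μ5 (Ad̂)_i d̂_j + μ6 (Ad̂)_j d̂_i. Then Σ_{i,j=1}^{2} σ_{ij}(A_{ij} + Ω_{ij}) = μ1 (d̂ᵀAd̂)² + μ4 Σ_{i,j} A_{ij}² + (μ5 + μ6)|Ad̂|² + λ1 ⟨N̂, Ωd̂⟩ − λ2 ⟨N̂, Ad̂⟩ + λ2 ⟨Ad̂, Ωd̂⟩. -/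
open Finset Matrix

/-! The stress is a combination of `A` and of the rank-one tensors `d̂ ⊗ d̂`, `N̂ ⊗ d̂`, `d̂ ⊗ N̂`,
`Ad̂ ⊗ d̂`, `d̂ ⊗ Ad̂`. Contracting `x ⊗ y` with `A + Ω` gives `⟨x, Ay⟩ + ⟨x, Ωy⟩`, and contracting
the transposed tensor `y ⊗ x` gives `⟨x, Ay⟩ - ⟨x, Ωy⟩`, because `(A + Ω)ᵀ = A - Ω`. The skew
part is invisible to `d̂ ⊗ d̂` and to `A`. Collecting terms, `⟨N̂, Ad̂⟩` appears with coefficient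
`μ2 + μ3`, which Parodi's relation turns into `-λ2`. -/

section Contraction

variable {n R : Type*}

theorem apply_swap_eq_neg_of_transpose_eq_neg [Neg R] {Ω : Matrix n n R} (hΩ : Ωᵀ = -Ω)
    (i j : n) : Ω j i = -Ω i j := by
  rw [← transpose_apply Ω i j, hΩ, neg_apply]

variable [Fintype n]

section CommSemiring

variable [CommSemiring R]

theorem sum_sum_mul_mul_eq_sum_mul_sum_mul (x y : n → R) (M : Matrix n n R) :
    ∑ i, ∑ j, x i * y j * M i j = ∑ i, x i * ∑ j, M i j * y j := by
  simp only [Finset.mul_sum]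
  exact Finset.sum_congr rfl fun i _ => Finset.sum_congr rfl fun j _ => by ring

theorem sum_sum_mul_mul_swap_eq_sum_mul_sum_mul (x y : n → R) (M : Matrix n n R) :
    ∑ i, ∑ j, x j * y i * M i j = ∑ i, x i * ∑ j, M j i * y j := by
  rw [Finset.sum_comm]
  exact sum_sum_mul_mul_eq_sum_mul_sum_mul x y Mᵀ

theorem sum_sum_mul_mul_add_eq (x y : n → R) (A Ω : Matrix n n R) :
    ∑ i, ∑ j, x i * y j * (A i j + Ω i j)
      = ∑ i, x i * ∑ j, A i j * y j + ∑ i, x i * ∑ j, Ω i j * y j := by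
  rw [← sum_sum_mul_mul_eq_sum_mul_sum_mul, ← sum_sum_mul_mul_eq_sum_mul_sum_mul,
    ← Finset.sum_add_distrib]
  simp only [mul_add, Finset.sum_add_distrib]

end CommSemiring

variable [CommRing R]

theorem sum_sum_mul_mul_swap_add_eq {A Ω : Matrix n n R} (hA : A.IsSymm) (hΩ : Ωᵀ = -Ω)
    (x y : n → R) :
    ∑ i, ∑ j, x j * y i * (A i j + Ω i j)
      = ∑ i, x i * ∑ j, A i j * y j - ∑ i, x i * ∑ j, Ω i j * y j := by
  calc ∑ i, ∑ j, x j * y i * (A i j + Ω i j) = ∑ i, ∑ j, x j * y i * (A j i + -Ω j i) := by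
        refine Finset.sum_congr rfl fun i _ => Finset.sum_congr rfl fun j _ => ?_
        rw [← hA.apply i j, apply_swap_eq_neg_of_transpose_eq_neg hΩ j i]
    _ = ∑ i, x i * ∑ j, A i j * y j + ∑ i, x i * ∑ j, -Ω i j * y j := by
        rw [Finset.sum_comm]
        exact sum_sum_mul_mul_add_eq x y A (-Ω)
    _ = _ := by simp only [neg_mul, Finset.sum_neg_distrib, mul_neg, sub_eq_add_neg]

variable [IsAddTorsionFree R]

theorem sum_mul_sum_mul_eq_zero_of_transpose_eq_neg {Ω : Matrix n n R} (hΩ : Ωᵀ = -Ω)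
    (x : n → R) : ∑ i, x i * ∑ j, Ω i j * x j = 0 := by
  rw [← sum_sum_mul_mul_eq_sum_mul_sum_mul]
  refine self_eq_neg.mp ?_
  calc ∑ i, ∑ j, x i * x j * Ω i j = ∑ i, ∑ j, x j * x i * Ω j i := Finset.sum_comm
    _ = ∑ i, ∑ j, -(x i * x j * Ω i j) := by
      refine Finset.sum_congr rfl fun i _ => Finset.sum_congr rfl fun j _ => ?_
      rw [apply_swap_eq_neg_of_transpose_eq_neg hΩ, mul_comm (x j), mul_neg]
    _ = -∑ i, ∑ j, x i * x j * Ω i j := by simp only [Finset.sum_neg_distrib]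

theorem sum_sum_mul_eq_zero_of_isSymm_of_transpose_eq_neg {A Ω : Matrix n n R} (hA : A.IsSymm)
    (hΩ : Ωᵀ = -Ω) : ∑ i, ∑ j, A i j * Ω i j = 0 := by
  refine self_eq_neg.mp ?_
  calc ∑ i, ∑ j, A i j * Ω i j = ∑ i, ∑ j, A j i * Ω j i := Finset.sum_comm
    _ = ∑ i, ∑ j, -(A i j * Ω i j) := by
      refine Finset.sum_congr rfl fun i _ => Finset.sum_congr rfl fun j _ => ?_
      rw [hA.apply, apply_swap_eq_neg_of_transpose_eq_neg hΩ, mul_neg]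
    _ = -∑ i, ∑ j, A i j * Ω i j := by simp only [Finset.sum_neg_distrib]

end Contraction

/-- **Leslie stress contraction identity.**
Under the relations `lam1 = μ2 − μ3`, `lam2 = μ5 − μ6` and Parodi's relation
`μ2 + μ3 = μ6 − μ5`, for a symmetric matrix `A`, a skew-symmetric matrix `Ω`,
and vectors `dh, Nh ∈ ℝ²`, the contraction of the Leslie stress tensor `σ`
against `A + Ω` equals
`μ1 (d̂ᵀAd̂)² + μ4 |A|² + (μ5+μ6)|Ad̂|² + lam1⟨N̂,Ωd̂⟩ − lam2⟨N̂,Ad̂⟩ + lam2⟨Ad̂,Ωd̂⟩`. -/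
theorem leslie_stress_contraction_identity
    (μ1 μ2 μ3 μ4 μ5 μ6 lam1 lam2 : ℝ)
    (hlam1 : lam1 = μ2 - μ3) (hlam2 : lam2 = μ5 - μ6) (hParodi : μ2 + μ3 = μ6 - μ5)
    (A Ω : Matrix (Fin 2) (Fin 2) ℝ)
    (hA : A.IsSymm) (hΩ : Ωᵀ = -Ω)
    (dh Nh : Fin 2 → ℝ)
    (σ : Matrix (Fin 2) (Fin 2) ℝ)
    (hσ : ∀ i j, σ i j =
      μ1 * (∑ k, ∑ l, A k l * dh k * dh l) * dh i * dh j
      + μ2 * Nh i * dh j + μ3 * Nh j * dh i + μ4 * A i j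
      + μ5 * (∑ k, A i k * dh k) * dh j + μ6 * (∑ k, A j k * dh k) * dh i) :
    ∑ i, ∑ j, σ i j * (A i j + Ω i j)
      = μ1 * (∑ k, ∑ l, A k l * dh k * dh l) ^ 2
        + μ4 * (∑ i, ∑ j, (A i j) ^ 2)
        + (μ5 + μ6) * (∑ i, (∑ j, A i j * dh j) ^ 2)
        + lam1 * (∑ i, Nh i * (∑ j, Ω i j * dh j))
        - lam2 * (∑ i, Nh i * (∑ j, A i j * dh j))
        + lam2 * (∑ i, (∑ j, A i j * dh j) * (∑ k, Ω i k * dh k)) := by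
  set q := ∑ k, ∑ l, A k l * dh k * dh l
  have hσ_contract : ∀ i j, σ i j * (A i j + Ω i j) =
      μ1 * q * (dh i * dh j * (A i j + Ω i j)) + μ2 * (Nh i * dh j * (A i j + Ω i j))
        + μ3 * (Nh j * dh i * (A i j + Ω i j)) + μ4 * (A i j * (A i j + Ω i j))
        + μ5 * ((∑ k, A i k * dh k) * dh j * (A i j + Ω i j))
        + μ6 * ((∑ k, A j k * dh k) * dh i * (A i j + Ω i j)) := by
    intro i j
    rw [hσ]
    ring
  have hq : ∑ i, dh i * ∑ j, A i j * dh j = q := by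
    rw [← sum_sum_mul_mul_eq_sum_mul_sum_mul]
    exact Finset.sum_congr rfl fun i _ => Finset.sum_congr rfl fun j _ => by ring
  have hAA : ∑ i, ∑ j, A i j * (A i j + Ω i j) = ∑ i, ∑ j, A i j ^ 2 := by
    simp only [mul_add, Finset.sum_add_distrib, sq,
      sum_sum_mul_eq_zero_of_isSymm_of_transpose_eq_neg hA hΩ, add_zero]
  simp only [hσ_contract, Finset.sum_add_distrib, ← Finset.mul_sum, sum_sum_mul_mul_add_eq,
    sum_sum_mul_mul_swap_add_eq hA hΩ, sum_mul_sum_mul_eq_zero_of_transpose_eq_neg hΩ, hq, hAA,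
    sq]
  subst hlam1 hlam2
  linear_combination (∑ i, Nh i * ∑ j, A i j * dh j) * hParodi
end

section
/- Let μ1, μ4, μ5, μ6, λ1, λ2 ∈ ℝ with λ1 ≠ 0. Let A be a real symmetric 2×2 matrix, Ω a real skew-symmetric 2×2 matrix, d, h ∈ ℝ³, s ∈ ℝ, and write d̂ = (d₁, d₂), ĥ = (h₁, h₂) ∈ ℝ². Suppose N ∈ ℝ³ satisfies λ1 N = −λ2 (Ad̂, 0) − (h + s d) + λ2 (d̂ᵀAd̂) d, and set N̂ = (N₁, N₂). Then μ1 (d̂ᵀAd̂)² + (μ5 + μ6)|Ad̂|² + λ1 ⟨N̂, Ωd̂⟩ − λ2 ⟨N̂, Ad̂⟩ + λ2 ⟨Ad̂, Ωd̂⟩ − ⟨(λ2/λ1) Ad̂ − Ωd̂, ĥ⟩ − (λ2/λ1) s (d̂ᵀAd̂) = (μ1 − λ2²/λ1)(d̂ᵀAd̂)² + (μ5 + μ6 + λ2²/λ1)|Ad̂|². -/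
/-!
Dot the relation for `N̂` with `Ωd̂` and with `Ad̂`. Since `Ω` is skew, `d̂ ⬝ Ωd̂ = 0`, so the
first product makes the `Ω`-terms cancel exactly. The second, divided by `lam1`, turns
`-lam2 ⟨N̂, Ad̂⟩` into `(lam2²/lam1)(|Ad̂|² - (d̂ᵀAd̂)²)` plus exactly the `ĥ`- and `s`-terms
that cancel the remaining ones.
-/

open Finset Matrix

/-- Embedding of `ℝ²` into `ℝ³` with vanishing third component. -/
def emb (v : Fin 2 → ℝ) (k : Fin 3) : ℝ :=
  if h : (k : ℕ) < 2 then v ⟨k, h⟩ else 0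

theorem emb_castSucc (v : Fin 2 → ℝ) (i : Fin 2) : emb v i.castSucc = v i :=
  dif_pos i.isLt

theorem dotProduct_mulVec_self_eq_zero_of_transpose_eq_neg {n R : Type*} [Fintype n]
    [CommRing R] [IsAddTorsionFree R] {Ω : Matrix n n R} (hΩ : Ωᵀ = -Ω) (v : n → R) :
    v ⬝ᵥ (Ω *ᵥ v) = 0 := by
  refine self_eq_neg.mp ?_
  conv_lhs => rw [dotProduct_mulVec, ← mulVec_transpose, hΩ, neg_mulVec, neg_dotProduct,
    dotProduct_comm]

theorem director_coupling_eq {ι : Type*} [Fintype ι] {lam1 lam2 s : ℝ} {N a d h w : ι → ℝ}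
    (hlam1 : lam1 ≠ 0) (hdw : d ⬝ᵥ w = 0)
    (hN : lam1 • N = -lam2 • a - (h + s • d) + (lam2 * (d ⬝ᵥ a)) • d) :
    lam1 * (N ⬝ᵥ w) - lam2 * (N ⬝ᵥ a) + lam2 * (a ⬝ᵥ w) - ((lam2 / lam1) • a - w) ⬝ᵥ h
      - lam2 / lam1 * s * (d ⬝ᵥ a) = lam2 ^ 2 / lam1 * (a ⬝ᵥ a - (d ⬝ᵥ a) ^ 2) := by
  have hdot (v : ι → ℝ) : lam1 * (N ⬝ᵥ v)
      = -lam2 * (a ⬝ᵥ v) - (h ⬝ᵥ v + s * (d ⬝ᵥ v)) + lam2 * (d ⬝ᵥ a) * (d ⬝ᵥ v) := by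
    simpa [smul_dotProduct, add_dotProduct, sub_dotProduct] using congrArg (· ⬝ᵥ v) hN
  have hw := hdot w
  rw [hdw] at hw
  rw [sub_dotProduct, smul_dotProduct, dotProduct_comm w h, dotProduct_comm a h, smul_eq_mul]
  field_simp
  linear_combination lam1 * hw - lam2 * hdot a

theorem leslie_dissipation_cancellation_general
    (μ1 μ5 μ6 lam1 lam2 : ℝ) (hlam1 : lam1 ≠ 0)
    (A Ω : Matrix (Fin 2) (Fin 2) ℝ)
    (hΩ : Ωᵀ = -Ω)
    (d h N : Fin 3 → ℝ) (s : ℝ)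
    (hN : ∀ k : Fin 3, lam1 * N k =
      - lam2 * emb (fun i => ∑ j, A i j * d (Fin.castSucc j)) k
      - (h k + s * d k)
      + lam2 * (∑ i, ∑ j, A i j * d (Fin.castSucc i) * d (Fin.castSucc j)) * d k) :
    μ1 * (∑ i, ∑ j, A i j * d (Fin.castSucc i) * d (Fin.castSucc j)) ^ 2
      + (μ5 + μ6) * (∑ i, (∑ j, A i j * d (Fin.castSucc j)) ^ 2)
      + lam1 * (∑ i, N (Fin.castSucc i) * (∑ j, Ω i j * d (Fin.castSucc j)))
      - lam2 * (∑ i, N (Fin.castSucc i) * (∑ j, A i j * d (Fin.castSucc j)))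
      + lam2 * (∑ i, (∑ j, A i j * d (Fin.castSucc j)) * (∑ j, Ω i j * d (Fin.castSucc j)))
      - (∑ i, ((lam2 / lam1) * (∑ j, A i j * d (Fin.castSucc j))
            - (∑ j, Ω i j * d (Fin.castSucc j))) * h (Fin.castSucc i))
      - (lam2 / lam1) * s
          * (∑ i, ∑ j, A i j * d (Fin.castSucc i) * d (Fin.castSucc j))
    = (μ1 - lam2 ^ 2 / lam1)
          * (∑ i, ∑ j, A i j * d (Fin.castSucc i) * d (Fin.castSucc j)) ^ 2
      + (μ5 + μ6 + lam2 ^ 2 / lam1)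
          * (∑ i, (∑ j, A i j * d (Fin.castSucc j)) ^ 2) := by
  have hq : ∑ i, ∑ j, A i j * d i.castSucc * d j.castSucc
      = (d ∘ Fin.castSucc) ⬝ᵥ (A *ᵥ (d ∘ Fin.castSucc)) := by
    simp only [dotProduct, mulVec, Function.comp_apply, mul_sum]
    exact sum_congr rfl fun i _ ↦ sum_congr rfl fun j _ ↦ by ring
  have hN' : lam1 • (N ∘ Fin.castSucc) = -lam2 • (A *ᵥ (d ∘ Fin.castSucc))
      - (h ∘ Fin.castSucc + s • (d ∘ Fin.castSucc))
      + (lam2 * ((d ∘ Fin.castSucc) ⬝ᵥ (A *ᵥ (d ∘ Fin.castSucc)))) • (d ∘ Fin.castSucc) := by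
    ext i
    have hi := hN i.castSucc
    rw [emb_castSucc, hq] at hi
    simp only [Pi.add_apply, Pi.sub_apply, Pi.smul_apply, smul_eq_mul, Function.comp_apply]
    exact hi
  have key := director_coupling_eq hlam1
    (dotProduct_mulVec_self_eq_zero_of_transpose_eq_neg hΩ (d ∘ Fin.castSucc)) hN'
  rw [hq]
  simp only [dotProduct, mulVec, Pi.sub_apply, Pi.smul_apply, smul_eq_mul, Function.comp_apply,
    sq] at key ⊢
  linear_combination key

/-- **The pointwise cancellation identity at the heart of the energy dissipation
law of the Ericksen–Leslie system.**  If
`lam1 N = −lam2 (Ad̂,0) − (h + s d) + lam2 (d̂ᵀAd̂) d` with `A` symmetric and `Ω`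
skew-symmetric, then
`μ1 (d̂ᵀAd̂)² + (μ5+μ6)|Ad̂|² + lam1⟨N̂,Ωd̂⟩ − lam2⟨N̂,Ad̂⟩ + lam2⟨Ad̂,Ωd̂⟩
  − ⟨(lam2/lam1)Ad̂ − Ωd̂, ĥ⟩ − (lam2/lam1) s (d̂ᵀAd̂)
  = (μ1 − lam2²/lam1)(d̂ᵀAd̂)² + (μ5+μ6+lam2²/lam1)|Ad̂|²`. -/
theorem leslie_dissipation_cancellation
    (μ1 μ4 μ5 μ6 lam1 lam2 : ℝ) (hlam1 : lam1 ≠ 0)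
    (A Ω : Matrix (Fin 2) (Fin 2) ℝ)
    (hA : A.IsSymm) (hΩ : Ωᵀ = -Ω)
    (d h N : Fin 3 → ℝ) (s : ℝ)
    (hN : ∀ k : Fin 3, lam1 * N k =
      - lam2 * emb (fun i => ∑ j, A i j * d (Fin.castSucc j)) k
      - (h k + s * d k)
      + lam2 * (∑ i, ∑ j, A i j * d (Fin.castSucc i) * d (Fin.castSucc j)) * d k) :
    μ1 * (∑ i, ∑ j, A i j * d (Fin.castSucc i) * d (Fin.castSucc j)) ^ 2
      + (μ5 + μ6) * (∑ i, (∑ j, A i j * d (Fin.castSucc j)) ^ 2)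
      + lam1 * (∑ i, N (Fin.castSucc i) * (∑ j, Ω i j * d (Fin.castSucc j)))
      - lam2 * (∑ i, N (Fin.castSucc i) * (∑ j, A i j * d (Fin.castSucc j)))
      + lam2 * (∑ i, (∑ j, A i j * d (Fin.castSucc j)) * (∑ j, Ω i j * d (Fin.castSucc j)))
      - (∑ i, ((lam2 / lam1) * (∑ j, A i j * d (Fin.castSucc j))
            - (∑ j, Ω i j * d (Fin.castSucc j))) * h (Fin.castSucc i))
      - (lam2 / lam1) * s
          * (∑ i, ∑ j, A i j * d (Fin.castSucc i) * d (Fin.castSucc j))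
    = (μ1 - lam2 ^ 2 / lam1)
          * (∑ i, ∑ j, A i j * d (Fin.castSucc i) * d (Fin.castSucc j)) ^ 2
      + (μ5 + μ6 + lam2 ^ 2 / lam1)
          * (∑ i, (∑ j, A i j * d (Fin.castSucc j)) ^ 2) :=
  leslie_dissipation_cancellation_general μ1 μ5 μ6 lam1 lam2 hlam1 A Ω hΩ d h N s hN
end

section
/- Let u ∈ C_c^∞(ℝ², ℝ²) be divergence free (∂₁u₁ + ∂₂u₂ = 0), let η : ℝ² → ℝ be smooth, and set A = ½(∇u + (∇u)ᵀ). Then ∫_{ℝ²} |A|² η² = ½ ∫_{ℝ²} |∇u|² η² − ½ ∫_{ℝ²} ⟨(u·∇)u, ∇(η²)⟩, where |A|² = Σ_{i,j} A_{ij}², |∇u|² = Σ_{i,j} (∂_i u_j)², and ((u·∇)u)_j = Σ_i u_i ∂_i u_j. -/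
open MeasureTheory Metric Finset

noncomputable section

/-- The plane `ℝ²` with its Euclidean structure. -/
abbrev E2 := EuclideanSpace ℝ (Fin 2)

/-- Spatial partial derivative in the `i`-th coordinate direction. -/
def pd (f : E2 → ℝ) (i : Fin 2) (x : E2) : ℝ :=
  fderiv ℝ f x (EuclideanSpace.single i 1)

namespace StrainAux

abbrev ee (i : Fin 2) : E2 := EuclideanSpace.single i 1

lemma contDiff_pd {f : E2 → ℝ} (hf : ContDiff ℝ (⊤ : ℕ∞) f) (i : Fin 2) :
    ContDiff ℝ (⊤ : ℕ∞) (pd f i) :=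
  (hf.fderiv_right (by simp)).clm_apply contDiff_const

lemma hcs_pd {f : E2 → ℝ} (hf : HasCompactSupport f) (i : Fin 2) :
    HasCompactSupport (pd f i) :=
  hf.fderiv_apply ℝ (ee i)

lemma pd_add {f g : E2 → ℝ} (hf : ContDiff ℝ (⊤ : ℕ∞) f) (hg : ContDiff ℝ (⊤ : ℕ∞) g) (i : Fin 2) (x : E2) :
    pd (fun y => f y + g y) i x = pd f i x + pd g i x := by
  unfold pd
  rw [fderiv_fun_add (hf.differentiable (by simp) x) (hg.differentiable (by simp) x)]
  rfl

lemma pd_mul {f g : E2 → ℝ} (hf : ContDiff ℝ (⊤ : ℕ∞) f) (hg : ContDiff ℝ (⊤ : ℕ∞) g) (i : Fin 2) (x : E2) :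
    pd (fun y => f y * g y) i x = pd f i x * g x + f x * pd g i x := by
  unfold pd
  rw [fderiv_fun_mul (hf.differentiable (by simp) x) (hg.differentiable (by simp) x)]
  simp [mul_comm]
  ring

lemma pd_comm {f : E2 → ℝ} (hf : ContDiff ℝ (⊤ : ℕ∞) f) (i j : Fin 2) (x : E2) :
    pd (pd f i) j x = pd (pd f j) i x := by
  have hdf : Differentiable ℝ (fderiv ℝ f) :=
    (hf.fderiv_right (m := (⊤ : ℕ∞)) (by simp)).differentiable (by simp)
  have key : ∀ v w : E2, fderiv ℝ (fun y => fderiv ℝ f y v) x w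
      = fderiv ℝ (fderiv ℝ f) x w v := by
    intro v w
    rw [fderiv_clm_apply (hdf x) (differentiableAt_const v)]
    simp
  have hsymm : fderiv ℝ (fderiv ℝ f) x (ee j) (ee i)
      = fderiv ℝ (fderiv ℝ f) x (ee i) (ee j) :=
    (hf.contDiffAt.isSymmSndFDerivAt (by norm_num; exact WithTop.coe_le_coe.mpr (le_top : (2 : ℕ∞) ≤ ⊤))).eq _ _
  unfold pd
  rw [key, key, hsymm]

lemma integral_pd_eq_zero {f : E2 → ℝ} (hf : ContDiff ℝ (⊤ : ℕ∞) f)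
    (hs : HasCompactSupport f) (i : Fin 2) :
    ∫ x : E2, pd f i x = 0 := by
  have h1 : Integrable (fun x : E2 => fderiv ℝ (fun _ => (1:ℝ)) x (ee i) * f x) := by
    simpa [fderiv_const] using (integrable_zero E2 ℝ (volume : Measure E2))
  have h2 : Integrable (fun x : E2 => (1:ℝ) * fderiv ℝ f x (ee i)) := by
    simp only [one_mul]
    exact ((contDiff_pd hf i).continuous).integrable_of_hasCompactSupport (hcs_pd hs i)
  have h3 : Integrable (fun x : E2 => (1:ℝ) * f x) := by
    simpa using (hf.continuous).integrable_of_hasCompactSupport hs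
  have := integral_mul_fderiv_eq_neg_fderiv_mul_of_integrable (f := fun _ : E2 => (1:ℝ))
    (g := f) (v := ee i) h1 h2 h3 (fun x _ => differentiableAt_const 1) (fun x _ => hf.differentiable (by simp) x)
  simp [fderiv_fun_const] at this
  exact this

end StrainAux

open StrainAux

/-- **Strain-rate energy identity for divergence-free fields (identity (2.10)).**
For `u ∈ C_c^∞(ℝ², ℝ²)` divergence free, η smooth, and
`A = ½(∇u + (∇u)ᵀ)`:
`∫ |A|²η² = ½∫ |∇u|²η² − ½∫ ⟨(u·∇)u, ∇(η²)⟩`. -/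
theorem strain_rate_energy_identity
    (u : E2 → Fin 2 → ℝ)
    (hu : ContDiff ℝ (⊤ : ℕ∞) u) (husupp : HasCompactSupport u)
    (hdiv : ∀ x : E2, ∑ i, pd (fun y => u y i) i x = 0)
    (η : E2 → ℝ) (hη : ContDiff ℝ (⊤ : ℕ∞) η) :
    (∫ x : E2, (∑ i, ∑ j,
        ((pd (fun y => u y j) i x + pd (fun y => u y i) j x) / 2) ^ 2)
        * (η x) ^ 2)
      = (1 / 2) * (∫ x : E2, (∑ i, ∑ j, (pd (fun y => u y j) i x) ^ 2) * (η x) ^ 2)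
        - (1 / 2) * ∫ x : E2, ∑ j,
            (∑ i, u x i * pd (fun y => u y j) i x) * pd (fun y => (η y) ^ 2) j x := by
  -- basic regularity facts
  have hUc : ∀ i : Fin 2, ContDiff ℝ (⊤ : ℕ∞) (fun y => u y i) := fun i =>
    (ContinuousLinearMap.proj (R := ℝ) (φ := fun _ : Fin 2 => ℝ) i).contDiff.comp hu
  have hUs : ∀ i : Fin 2, HasCompactSupport (fun y => u y i) := fun i =>
    husupp.comp_left (g := fun v : Fin 2 → ℝ => v i) rfl
  have hη2 : ContDiff ℝ (⊤ : ℕ∞) (fun y => (η y) ^ 2) := hη.pow 2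
  have hpdc : ∀ j i : Fin 2, ContDiff ℝ (⊤ : ℕ∞) (pd (fun y => u y j) i) := fun j i =>
    contDiff_pd (hUc j) i
  -- vanishing outside `tsupport u`
  have hu0 : ∀ (x : E2) (i : Fin 2), x ∉ tsupport u → u x i = 0 := by
    intro x i hx
    have : u x = 0 := image_eq_zero_of_notMem_tsupport hx
    simp [this]
  have hpd0 : ∀ (j i : Fin 2) (x : E2), x ∉ tsupport u → pd (fun y => u y j) i x = 0 := by
    intro j i x hx
    have hsub : tsupport (fun y => u y j) ⊆ tsupport u := by
      apply closure_mono
      intro y hy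
      simp only [Function.mem_support] at hy ⊢
      intro h; exact hy (by simp [h])
    have : x ∉ tsupport (fun y => u y j) := fun h => hx (hsub h)
    have h0 : fderiv ℝ (fun y => u y j) x = 0 := fderiv_of_notMem_tsupport (𝕜 := ℝ) this
    simp [pd, h0]
  -- the convective field V j = ∑ i, u i ∂ i u j and test functions F j = V j * η²
  set V : Fin 2 → E2 → ℝ := fun j x => ∑ i, u x i * pd (fun y => u y j) i x with hV
  have hVc : ∀ j, ContDiff ℝ (⊤ : ℕ∞) (V j) := by
    intro j
    have : ContDiff ℝ (⊤ : ℕ∞) (fun x => u x 0 * pd (fun y => u y j) 0 x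
        + u x 1 * pd (fun y => u y j) 1 x) :=
      ((hUc 0).mul (hpdc j 0)).add ((hUc 1).mul (hpdc j 1))
    simpa [hV, Fin.sum_univ_two] using this
  have hVs : ∀ j, HasCompactSupport (V j) := by
    intro j
    apply HasCompactSupport.intro husupp
    intro x hx
    simp [hV, Fin.sum_univ_two, hu0 x 0 hx, hu0 x 1 hx]
  set F : Fin 2 → E2 → ℝ := fun j x => V j x * (η x) ^ 2 with hF
  have hFc : ∀ j, ContDiff ℝ (⊤ : ℕ∞) (F j) := fun j => (hVc j).mul hη2
  have hFs : ∀ j, HasCompactSupport (F j) := fun j => (hVs j).mul_right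
  -- vanishing of second-derivative divergence term
  have hdiv0 : (fun y : E2 => pd (fun z => u z 0) 0 y + pd (fun z => u z 1) 1 y)
      = fun _ => (0:ℝ) := by
    funext y
    simpa [Fin.sum_univ_two] using hdiv y
  have hzero : ∀ (i : Fin 2) (x : E2),
      pd (pd (fun z => u z 0) 0) i x + pd (pd (fun z => u z 1) 1) i x = 0 := by
    intro i x
    rw [← pd_add (hpdc 0 0) (hpdc 1 1) i x]
    have : pd (fun y => pd (fun z => u z 0) 0 y + pd (fun z => u z 1) 1 y) i x
        = pd (fun _ => (0:ℝ)) i x := by rw [hdiv0]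
    rw [this]
    simp [pd, fderiv_fun_const]
  -- pointwise splitting of the divergence of F
  have hsplit : ∀ x : E2, pd (F 0) 0 x + pd (F 1) 1 x
      = (∑ i, ∑ j, pd (fun y => u y j) i x * pd (fun y => u y i) j x) * (η x) ^ 2
        + ∑ j, V j x * pd (fun y => (η y) ^ 2) j x := by
    intro x
    have e0 : pd (F 0) 0 x = pd (V 0) 0 x * (η x) ^ 2 + V 0 x * pd (fun y => (η y) ^ 2) 0 x :=
      pd_mul (hVc 0) hη2 0 x
    have e1 : pd (F 1) 1 x = pd (V 1) 1 x * (η x) ^ 2 + V 1 x * pd (fun y => (η y) ^ 2) 1 x :=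
      pd_mul (hVc 1) hη2 1 x
    have hVeq : ∀ j, V j = fun x => u x 0 * pd (fun y => u y j) 0 x
        + u x 1 * pd (fun y => u y j) 1 x := by
      intro j; funext x; simp [hV, Fin.sum_univ_two]
    have dV : ∀ j k : Fin 2, pd (V j) k x
        = (pd (fun y => u y 0) k x * pd (fun y => u y j) 0 x
            + u x 0 * pd (pd (fun y => u y j) 0) k x)
          + (pd (fun y => u y 1) k x * pd (fun y => u y j) 1 x
            + u x 1 * pd (pd (fun y => u y j) 1) k x) := by
      intro j k
      rw [hVeq j]
      rw [pd_add ((hUc 0).mul (hpdc j 0)) ((hUc 1).mul (hpdc j 1)) k x,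
        pd_mul (hUc 0) (hpdc j 0) k x, pd_mul (hUc 1) (hpdc j 1) k x]
    rw [e0, e1, dV 0 0, dV 1 1]
    have s0 := hzero 0 x
    have s1 := hzero 1 x
    have sw0 : pd (pd (fun y => u y 0) 1) 0 x = pd (pd (fun y => u y 0) 0) 1 x :=
      pd_comm (hUc 0) 1 0 x
    have sw1 : pd (pd (fun y => u y 1) 0) 1 x = pd (pd (fun y => u y 1) 1) 0 x :=
      pd_comm (hUc 1) 0 1 x
    simp only [Fin.sum_univ_two, hV]
    rw [sw0, sw1]
    linear_combination (u x 1 * (η x) ^ 2) * s1 + (u x 0 * (η x) ^ 2) * s0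
  -- integrability of all pieces
  have Icross : Integrable (fun x : E2 =>
      (∑ i, ∑ j, pd (fun y => u y j) i x * pd (fun y => u y i) j x) * (η x) ^ 2) := by
    have hc : ContDiff ℝ (⊤ : ℕ∞) (fun x : E2 =>
        (∑ i, ∑ j, pd (fun y => u y j) i x * pd (fun y => u y i) j x) * (η x) ^ 2) := by
      have := ((((hpdc 0 0).mul (hpdc 0 0)).add ((hpdc 1 0).mul (hpdc 0 1))).add
        (((hpdc 0 1).mul (hpdc 1 0)).add ((hpdc 1 1).mul (hpdc 1 1)))).mul hη2
      simpa [Fin.sum_univ_two] using this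
    apply hc.continuous.integrable_of_hasCompactSupport
    apply HasCompactSupport.intro husupp
    intro x hx
    simp [Fin.sum_univ_two, hpd0 _ _ x hx]
  have Ig2 : Integrable (fun x : E2 =>
      ∑ j, V j x * pd (fun y => (η y) ^ 2) j x) := by
    have hc : ContDiff ℝ (⊤ : ℕ∞) (fun x : E2 => ∑ j, V j x * pd (fun y => (η y) ^ 2) j x) := by
      have := ((hVc 0).mul (contDiff_pd hη2 0)).add ((hVc 1).mul (contDiff_pd hη2 1))
      simpa [Fin.sum_univ_two] using this
    apply hc.continuous.integrable_of_hasCompactSupport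
    apply HasCompactSupport.intro husupp
    intro x hx
    simp [hV, Fin.sum_univ_two, hu0 x 0 hx, hu0 x 1 hx]
  have Isq : Integrable (fun x : E2 =>
      (∑ i, ∑ j, (pd (fun y => u y j) i x) ^ 2) * (η x) ^ 2) := by
    have hc : ContDiff ℝ (⊤ : ℕ∞) (fun x : E2 =>
        (∑ i, ∑ j, (pd (fun y => u y j) i x) ^ 2) * (η x) ^ 2) := by
      have := ((((hpdc 0 0).pow 2).add ((hpdc 1 0).pow 2)).add
        (((hpdc 0 1).pow 2).add ((hpdc 1 1).pow 2))).mul hη2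
      simpa [Fin.sum_univ_two] using this
    apply hc.continuous.integrable_of_hasCompactSupport
    apply HasCompactSupport.intro husupp
    intro x hx
    simp [Fin.sum_univ_two, hpd0 _ _ x hx]
  -- the integral identity from the divergence theorem
  have IpdF : ∀ j : Fin 2, Integrable (fun x => pd (F j) j x) := fun j =>
    (contDiff_pd (hFc j) j).continuous.integrable_of_hasCompactSupport (hcs_pd (hFs j) j)
  have hintF : ∫ x : E2, (pd (F 0) 0 x + pd (F 1) 1 x) = 0 := by
    rw [integral_add (IpdF 0) (IpdF 1), integral_pd_eq_zero (hFc 0) (hFs 0) 0,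
      integral_pd_eq_zero (hFc 1) (hFs 1) 1]
    ring
  have key : (∫ x : E2, (∑ i, ∑ j, pd (fun y => u y j) i x * pd (fun y => u y i) j x)
        * (η x) ^ 2)
      = - ∫ x : E2, ∑ j, V j x * pd (fun y => (η y) ^ 2) j x := by
    have heq : (fun x : E2 =>
        (∑ i, ∑ j, pd (fun y => u y j) i x * pd (fun y => u y i) j x) * (η x) ^ 2
          + ∑ j, V j x * pd (fun y => (η y) ^ 2) j x)
        = fun x => pd (F 0) 0 x + pd (F 1) 1 x := funext fun x => (hsplit x).symm
    have h0 : (∫ x : E2,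
        ((∑ i, ∑ j, pd (fun y => u y j) i x * pd (fun y => u y i) j x) * (η x) ^ 2
          + ∑ j, V j x * pd (fun y => (η y) ^ 2) j x)) = 0 := by
      rw [heq] at *
      exact hintF
    rw [integral_add Icross Ig2] at h0
    linarith
  -- final assembly
  have hptwise : (fun x : E2 => (∑ i, ∑ j,
        ((pd (fun y => u y j) i x + pd (fun y => u y i) j x) / 2) ^ 2) * (η x) ^ 2)
      = fun x => (1/2) * ((∑ i, ∑ j, (pd (fun y => u y j) i x) ^ 2) * (η x) ^ 2)
        + (1/2) * ((∑ i, ∑ j, pd (fun y => u y j) i x * pd (fun y => u y i) j x)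
            * (η x) ^ 2) := by
    funext x
    simp only [Fin.sum_univ_two]
    ring
  rw [hptwise, integral_add (Isq.const_mul _) (Icross.const_mul _),
    integral_const_mul, integral_const_mul, key]
  simp [hV]
  ring
end
end

section
/- Assume the Leslie coefficients satisfy λ1 = μ2 − μ3 < 0 and λ2 = μ5 − μ6. Let 0 < T < ∞ and let u : ℝ² × [0,T] → ℝ² and d : ℝ² × [0,T] → ℝ³ be smooth with |d| ≡ 1, satisfying the director equation ∂_t d + (u·∇)d − (Ωd̂, 0) + (λ2/λ1)(Ad̂, 0) = (1/|λ1|)(Δd + |∇d|² d) + (λ2/λ1)(d̂ᵀAd̂) d on ℝ² × [0,T], where A = ½(∇u + (∇u)ᵀ), Ω = ½(∇u − (∇u)ᵀ), d̂ = (d₁, d₂). Suppose |u|, |∇u|, and |∇d| are bounded on ℝ² × [0,T]. If d₃(x, 0) ≥ 0 for all x ∈ ℝ², then d₃(x, t) ≥ 0 for all (x, t) ∈ ℝ² × [0,T]. -/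
open MeasureTheory Metric Finset

noncomputable section

/-- Spatial Laplacian. -/
def lap (f : E2 → ℝ) (x : E2) : ℝ := ∑ i, pd (fun y => pd f i y) i x

/-- Rate of strain tensor `A = ½(∇u + (∇u)ᵀ)`. -/
def Amat (u : E2 → ℝ → Fin 2 → ℝ) (x : E2) (t : ℝ) (i j : Fin 2) : ℝ :=
  (pd (fun y => u y t j) i x + pd (fun y => u y t i) j x) / 2

/-- Skew part of the velocity gradient `Ω = ½(∇u − (∇u)ᵀ)`. -/
def Omat (u : E2 → ℝ → Fin 2 → ℝ) (x : E2) (t : ℝ) (i j : Fin 2) : ℝ :=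
  (pd (fun y => u y t j) i x - pd (fun y => u y t i) j x) / 2

/-- Horizontal part `d̂ = (d₁, d₂)` of the director. -/
def dhat (d : E2 → ℝ → Fin 3 → ℝ) (x : E2) (t : ℝ) (i : Fin 2) : ℝ :=
  d x t (Fin.castSucc i)

/-- `d̂ᵀ A d̂`. -/
def dAd (u : E2 → ℝ → Fin 2 → ℝ) (d : E2 → ℝ → Fin 3 → ℝ) (x : E2) (t : ℝ) : ℝ :=
  ∑ i, ∑ j, Amat u x t i j * dhat d x t i * dhat d x t j

/-- `(A d̂)ᵢ`. -/
def Adhat (u : E2 → ℝ → Fin 2 → ℝ) (d : E2 → ℝ → Fin 3 → ℝ) (x : E2) (t : ℝ)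
    (i : Fin 2) : ℝ :=
  ∑ j, Amat u x t i j * dhat d x t j

/-- `(Ω d̂)ᵢ`. -/
def Odhat (u : E2 → ℝ → Fin 2 → ℝ) (d : E2 → ℝ → Fin 3 → ℝ) (x : E2) (t : ℝ)
    (i : Fin 2) : ℝ :=
  ∑ j, Omat u x t i j * dhat d x t j

/-- `N = ∂ₜ d + (u·∇)d − (Ωd̂, 0)`. -/
def Nvec (u : E2 → ℝ → Fin 2 → ℝ) (d : E2 → ℝ → Fin 3 → ℝ) (x : E2) (t : ℝ)
    (k : Fin 3) : ℝ :=
  deriv (fun s => d x s k) t + (∑ i, u x t i * pd (fun y => d y t k) i x)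
    - emb (Odhat u d x t) k

/-- `N̂ = (N₁, N₂)`. -/
def Nhat (u : E2 → ℝ → Fin 2 → ℝ) (d : E2 → ℝ → Fin 3 → ℝ) (x : E2) (t : ℝ)
    (i : Fin 2) : ℝ :=
  Nvec u d x t (Fin.castSucc i)

/-- The Leslie stress tensor `σᴸ(u,d)`. -/
def sigmaL (μ1 μ2 μ3 μ4 μ5 μ6 : ℝ) (u : E2 → ℝ → Fin 2 → ℝ)
    (d : E2 → ℝ → Fin 3 → ℝ) (x : E2) (t : ℝ) (i j : Fin 2) : ℝ :=
  μ1 * dAd u d x t * dhat d x t i * dhat d x t j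
    + μ2 * Nhat u d x t i * dhat d x t j
    + μ3 * Nhat u d x t j * dhat d x t i
    + μ4 * Amat u x t i j
    + μ5 * Adhat u d x t i * dhat d x t j
    + μ6 * Adhat u d x t j * dhat d x t i

/-- `|∇d|²`. -/
def gradD2 (d : E2 → ℝ → Fin 3 → ℝ) (x : E2) (t : ℝ) : ℝ :=
  ∑ k, ∑ i, (pd (fun y => d y t k) i x) ^ 2

/-- `(u, d, P)` is a smooth solution of the Ericksen–Leslie system (ES2) for times
in the set `I ⊆ ℝ`:  `u, d, P` are smooth, `|d| ≡ 1`, `∇·u = 0`,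
`∂ₜu + (u·∇)u + ∇P = −∇·(∇d⊙∇d) + ∇·σᴸ(u,d)`, and
`∂ₜd + (u·∇)d − (Ωd̂,0) + (lam2/lam1)(Ad̂,0)
   = (1/|lam1|)(Δd + |∇d|²d) + (lam2/lam1)(d̂ᵀAd̂)d`. -/
def IsEL (μ1 μ2 μ3 μ4 μ5 μ6 lam1 lam2 : ℝ) (u : E2 → ℝ → Fin 2 → ℝ)
    (d : E2 → ℝ → Fin 3 → ℝ) (P : E2 → ℝ → ℝ) (I : Set ℝ) : Prop :=
  ContDiff ℝ (⊤ : ℕ∞) (fun p : E2 × ℝ => u p.1 p.2) ∧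
  ContDiff ℝ (⊤ : ℕ∞) (fun p : E2 × ℝ => d p.1 p.2) ∧
  ContDiff ℝ (⊤ : ℕ∞) (fun p : E2 × ℝ => P p.1 p.2) ∧
  (∀ x : E2, ∀ t ∈ I, ∑ k, (d x t k) ^ 2 = 1) ∧
  (∀ x : E2, ∀ t ∈ I, ∑ i, pd (fun y => u y t i) i x = 0) ∧
  (∀ x : E2, ∀ t ∈ I, ∀ i : Fin 2,
    deriv (fun s => u x s i) t + (∑ j, u x t j * pd (fun y => u y t i) j x)
      + pd (fun y => P y t) i x
    = - (∑ j, pd (fun y =>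
          ∑ k, pd (fun z => d z t k) i y * pd (fun z => d z t k) j y) j x)
      + ∑ j, pd (fun y => sigmaL μ1 μ2 μ3 μ4 μ5 μ6 u d y t i j) j x) ∧
  (∀ x : E2, ∀ t ∈ I, ∀ k : Fin 3,
    deriv (fun s => d x s k) t + (∑ i, u x t i * pd (fun y => d y t k) i x)
      - emb (Odhat u d x t) k + (lam2 / lam1) * emb (Adhat u d x t) k
    = (1 / |lam1|) * (lap (fun y => d y t k) x + gradD2 d x t * d x t k)
      + (lam2 / lam1) * dAd u d x t * d x t k)


section Helpers
open Filter

lemma oneSided {ψ : ℝ → ℝ} {a b c : ℝ} (hab : a < b) (hd : HasDerivAt ψ c b)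
    (hmin : ∀ s ∈ Set.Icc a b, ψ b ≤ ψ s) : c ≤ 0 := by
  by_contra h
  push_neg at h
  have hs := hasDerivAt_iff_tendsto_slope.1 hd
  have hev : ∀ᶠ s in nhdsWithin b {b}ᶜ, 0 < slope ψ b s :=
    hs (eventually_gt_nhds h)
  have hlt : nhdsWithin b (Set.Iio b) ≤ nhdsWithin b {b}ᶜ :=
    nhdsWithin_mono _ (fun s hs => ne_of_lt hs)
  have hev2 : ∀ᶠ s in nhdsWithin b (Set.Iio b), 0 < slope ψ b s := hlt hev
  have hmem : Set.Ioo a b ∈ nhdsWithin b (Set.Iio b) :=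
    mem_nhdsWithin.2 ⟨Set.Ioi a, isOpen_Ioi, hab, fun s hs => ⟨hs.1, hs.2⟩⟩
  have : (nhdsWithin b (Set.Iio b)).NeBot := nhdsLT_neBot b
  obtain ⟨s, hs1, hs2⟩ := (hev2.and (eventually_of_mem hmem (fun s hs => hs))).exists
  rw [slope_def_field] at hs1
  rcases div_pos_iff.1 hs1 with ⟨_, h2⟩ | ⟨h1, _⟩
  · linarith [hs2.2]
  · linarith [hmin s ⟨le_of_lt hs2.1, le_of_lt hs2.2⟩]

lemma secondDeriv_nonneg {ψ : ℝ → ℝ} (hψ : ContDiff ℝ 2 ψ)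
    (hmin : ∀ s : ℝ, ψ 0 ≤ ψ s) : 0 ≤ deriv (deriv ψ) 0 := by
  by_contra h
  push_neg at h
  have hd1 : Differentiable ℝ ψ := hψ.differentiable (by norm_num)
  have hd2 : Differentiable ℝ (deriv ψ) := by
    have := hψ.iterate_deriv' 1 1
    simpa using this.differentiable (by norm_num)
  have hψ0 : deriv ψ 0 = 0 := by
    have hl : IsLocalMin ψ 0 := Filter.Eventually.of_forall (fun y => hmin y)
    exact hl.deriv_eq_zero
  have hs := hasDerivAt_iff_tendsto_slope.1 (hd2 0).hasDerivAt
  have hev : ∀ᶠ s in nhdsWithin 0 {(0:ℝ)}ᶜ, slope (deriv ψ) 0 s < 0 :=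
    hs (eventually_lt_nhds h)
  have hlt : nhdsWithin (0:ℝ) (Set.Ioi 0) ≤ nhdsWithin 0 {(0:ℝ)}ᶜ :=
    nhdsWithin_mono _ (fun s hs => ne_of_gt hs)
  obtain ⟨δ, hδ, hδ2⟩ := Metric.mem_nhdsWithin_iff.1 (hlt hev)
  have hneg : ∀ s ∈ interior (Set.Icc 0 (δ/2)), deriv ψ s < 0 := by
    intro s hs
    rw [interior_Icc] at hs
    have h0 : (0:ℝ) < s := hs.1
    have hsd : s ∈ Metric.ball (0:ℝ) δ := by
      rw [Metric.mem_ball, Real.dist_eq, sub_zero, abs_of_pos h0]; linarith [hs.2]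
    have hsl := hδ2 ⟨hsd, h0⟩
    rw [Set.mem_setOf_eq, slope_def_field, hψ0, sub_zero, sub_zero] at hsl
    rcases div_neg_iff.1 hsl with ⟨_, h2⟩ | ⟨h1, _⟩
    · linarith
    · exact h1
  have hanti : StrictAntiOn ψ (Set.Icc 0 (δ/2)) :=
    strictAntiOn_of_deriv_neg (convex_Icc _ _) (hd1.continuous.continuousOn) hneg
  have hlt2 := hanti ⟨le_refl 0, by linarith⟩ ⟨by linarith, le_refl _⟩ (by linarith)
  exact absurd (hmin (δ/2)) (not_le.2 hlt2)



lemma contDiff_pd {g : E2 → ℝ} (hg : ContDiff ℝ (⊤ : ℕ∞) g) (i : Fin 2) :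
    ContDiff ℝ (⊤ : ℕ∞) (fun y => pd g i y) := by
  have h1 : ContDiff ℝ (⊤ : ℕ∞) (fderiv ℝ g) := hg.fderiv_right (by simp)
  exact (ContinuousLinearMap.apply ℝ ℝ (EuclideanSpace.single i 1)).contDiff.comp h1

lemma hasDerivAt_line {g : E2 → ℝ} (x : E2) (i : Fin 2) (s : ℝ)
    (hg : DifferentiableAt ℝ g (x + s • (EuclideanSpace.single i (1:ℝ)))) :
    HasDerivAt (fun r => g (x + r • (EuclideanSpace.single i (1:ℝ))))
      (pd g i (x + s • (EuclideanSpace.single i 1))) s := by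
  have hc : HasDerivAt (fun r : ℝ => x + r • (EuclideanSpace.single i (1:ℝ)))
      (EuclideanSpace.single i 1) s := by
    simpa using ((hasDerivAt_id s).smul_const (EuclideanSpace.single i (1:ℝ))).const_add x
  exact (hg.hasFDerivAt.comp_hasDerivAt s hc)

lemma contDiff_line {g : E2 → ℝ} (hg : ContDiff ℝ (⊤ : ℕ∞) g) (x : E2) (i : Fin 2) :
    ContDiff ℝ (⊤ : ℕ∞) (fun r : ℝ => g (x + r • (EuclideanSpace.single i (1:ℝ)))) := by
  apply hg.comp
  exact (contDiff_const.add ((contDiff_id).smul contDiff_const))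

-- second derivative along line equals pd pd, and the min principle
lemma lap_term_nonneg {g : E2 → ℝ} (hg : ContDiff ℝ (⊤ : ℕ∞) g) (x : E2) (i : Fin 2)
    (hmin : ∀ y : E2, g x ≤ g y) : 0 ≤ pd (fun y => pd g i y) i x := by
  set e := EuclideanSpace.single i (1:ℝ) with he
  set ψ : ℝ → ℝ := fun r => g (x + r • e) with hψdef
  have hψ : ContDiff ℝ (⊤ : ℕ∞) ψ := contDiff_line hg x i
  have hgd : Differentiable ℝ g := hg.differentiable (by simp)
  have hd1 : ∀ r : ℝ, deriv ψ r = pd g i (x + r • e) := fun r =>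
    (hasDerivAt_line x i r (hgd _)).deriv
  have hpd : Differentiable ℝ (fun y => pd g i y) :=
    (contDiff_pd hg i).differentiable (by simp)
  have hd2 : deriv (deriv ψ) 0 = pd (fun y => pd g i y) i x := by
    have : deriv ψ = fun r => pd g i (x + r • e) := funext hd1
    rw [this]
    have := (hasDerivAt_line (g := fun y => pd g i y) x i 0 (hpd _)).deriv
    rw [this]
    norm_num
  rw [← hd2]
  apply secondDeriv_nonneg (hψ.of_le (WithTop.coe_le_coe.2 (le_top : (2:ℕ∞) ≤ ⊤)))
  intro s
  have : ψ 0 = g x := by simp [hψdef]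
  rw [this]
  exact hmin _

lemma hasFDerivAt_q (x : E2) :
    HasFDerivAt (fun y : E2 => ∑ j, (y j)^2)
      (∑ j, (2 * x j) • (EuclideanSpace.proj j : E2 →L[ℝ] ℝ)) x := by
  apply HasFDerivAt.fun_sum
  intro j _
  have h1 : HasFDerivAt (fun y : E2 => y j) (EuclideanSpace.proj (𝕜 := ℝ) j) x :=
    (EuclideanSpace.proj (𝕜 := ℝ) j).hasFDerivAt
  have h2 := h1.mul h1
  have : x j • (EuclideanSpace.proj (𝕜 := ℝ) j : E2 →L[ℝ] ℝ)
      + x j • (EuclideanSpace.proj (𝕜 := ℝ) j : E2 →L[ℝ] ℝ)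
      = (2 * x j) • (EuclideanSpace.proj (𝕜 := ℝ) j : E2 →L[ℝ] ℝ) := by
    rw [← add_smul]; ring_nf
  rw [this] at h2
  exact h2.congr_of_eventuallyEq (Filter.Eventually.of_forall fun y => by
    change y j ^ 2 = y j * y j; ring)

lemma apply_q_deriv (x : E2) (i : Fin 2) :
    (∑ j, (2 * x j) • (EuclideanSpace.proj (𝕜 := ℝ) j : E2 →L[ℝ] ℝ))
      (EuclideanSpace.single i 1) = 2 * x i := by
  rw [ContinuousLinearMap.sum_apply]
  have hc : ∀ j : Fin 2, ((2 * x j) • (EuclideanSpace.proj (𝕜 := ℝ) j : E2 →L[ℝ] ℝ))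
      (EuclideanSpace.single i 1) = if j = i then 2 * x j else 0 := by
    intro j
    simp only [ContinuousLinearMap.smul_apply, smul_eq_mul]
    have : EuclideanSpace.proj (𝕜 := ℝ) j (EuclideanSpace.single i (1:ℝ))
        = if j = i then (1:ℝ) else 0 := by
      show EuclideanSpace.single i (1:ℝ) j = _
      rw [EuclideanSpace.single_apply]
    rw [this]
    by_cases h : j = i <;> simp [h]
  simp only [hc]
  simp

lemma pd_phi {g : E2 → ℝ} (hg : ContDiff ℝ (⊤ : ℕ∞) g) (A B : ℝ) (i : Fin 2) (x : E2) :
    pd (fun y => A * g y + B * (1 + ∑ j, (y j)^2)) i x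
      = A * pd g i x + B * (2 * x i) := by
  have hgd := (hg.differentiable (by simp) x).hasFDerivAt
  have h2 : HasFDerivAt (fun y : E2 => B * (1 + ∑ j, (y j)^2))
      (B • (∑ j, (2 * x j) • (EuclideanSpace.proj (𝕜 := ℝ) j : E2 →L[ℝ] ℝ))) x :=
    ((hasFDerivAt_q x).const_add 1).const_mul B
  have h3 := (hgd.const_mul A).fun_add h2
  rw [pd, h3.fderiv]
  simp only [ContinuousLinearMap.add_apply, ContinuousLinearMap.smul_apply,
    smul_eq_mul, apply_q_deriv]
  rfl

lemma contDiff_pd' {g : E2 → ℝ} (hg : ContDiff ℝ (⊤ : ℕ∞) g) (i : Fin 2) :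
    ContDiff ℝ (⊤ : ℕ∞) (fun y => pd g i y) := by
  have h1 : ContDiff ℝ (⊤ : ℕ∞) (fderiv ℝ g) := hg.fderiv_right (by simp)
  exact (ContinuousLinearMap.apply ℝ ℝ (EuclideanSpace.single i 1)).contDiff.comp h1

lemma pd_pd_phi {g : E2 → ℝ} (hg : ContDiff ℝ (⊤ : ℕ∞) g) (A B : ℝ) (i : Fin 2) (x : E2) :
    pd (fun y => pd (fun z => A * g z + B * (1 + ∑ j, (z j)^2)) i y) i x
      = A * pd (fun y => pd g i y) i x + B * 2 := by
  have h1 : (fun y => pd (fun z => A * g z + B * (1 + ∑ j, (z j)^2)) i y)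
      = fun y => A * pd g i y + B * (2 * y i) := funext (fun y => pd_phi hg A B i y)
  rw [h1]
  have hgp : ContDiff ℝ (⊤ : ℕ∞) (fun y => pd g i y) := contDiff_pd' hg i
  have hd1 := ((hgp.differentiable (by simp) x).hasFDerivAt).const_mul A
  have hd2 : HasFDerivAt (fun y : E2 => B * (2 * y i))
      ((B * 2) • (EuclideanSpace.proj (𝕜 := ℝ) i : E2 →L[ℝ] ℝ)) x := by
    have := ((EuclideanSpace.proj (𝕜 := ℝ) i).hasFDerivAt (x := x)).const_mul (B * 2)
    exact this.congr_of_eventuallyEq (Filter.Eventually.of_forall fun y => by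
      change B * (2 * y i) = B * 2 * y i; ring)
  have h3 := hd1.fun_add hd2
  rw [pd, h3.fderiv]
  simp only [ContinuousLinearMap.add_apply, ContinuousLinearMap.smul_apply, smul_eq_mul]
  have : EuclideanSpace.proj (𝕜 := ℝ) i (EuclideanSpace.single i (1:ℝ)) = 1 := by
    show EuclideanSpace.single i (1:ℝ) i = 1
    rw [EuclideanSpace.single_apply]; simp
  rw [this]
  ring_nf
  rfl


lemma contDiff_q : ContDiff ℝ (⊤ : ℕ∞) (fun y : E2 => ∑ j, (y j)^2) := by
  apply ContDiff.sum
  intro j _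
  exact ((EuclideanSpace.proj (𝕜 := ℝ) j).contDiff).pow 2

def barφ (K γ ε : ℝ) (d : E2 → ℝ → Fin 3 → ℝ) (p : E2 × ℝ) : ℝ :=
  Real.exp (-(K*p.2)) * d p.1 p.2 2
    + (ε * Real.exp (γ*p.2)) * (1 + ∑ j, (p.1 j)^2)

section barphi
variable {K γ ε : ℝ} {d : E2 → ℝ → Fin 3 → ℝ}

lemma contDiff_slice_x (hd3 : ContDiff ℝ (⊤ : ℕ∞) (fun p : E2 × ℝ => d p.1 p.2 2))
    (t : ℝ) : ContDiff ℝ (⊤ : ℕ∞) (fun y : E2 => d y t 2) :=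
  hd3.comp (contDiff_id.prodMk contDiff_const)

lemma contDiff_barφ_slice (hd3 : ContDiff ℝ (⊤ : ℕ∞) (fun p : E2 × ℝ => d p.1 p.2 2))
    (t : ℝ) : ContDiff ℝ (⊤ : ℕ∞) (fun y : E2 => barφ K γ ε d (y, t)) := by
  have hb : (fun y : E2 => barφ K γ ε d (y, t))
      = fun y => Real.exp (-(K*t)) * d y t 2
        + (ε * Real.exp (γ*t)) * (1 + ∑ j, (y j)^2) := rfl
  rw [hb]
  exact (contDiff_const.mul (contDiff_slice_x hd3 t)).add
    (contDiff_const.mul (contDiff_const.add contDiff_q))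

lemma barφ_grad (hd3 : ContDiff ℝ (⊤ : ℕ∞) (fun p : E2 × ℝ => d p.1 p.2 2))
    (x : E2) (t : ℝ)
    (hmin : ∀ y : E2, barφ K γ ε d (x, t) ≤ barφ K γ ε d (y, t)) (i : Fin 2) :
    Real.exp (-(K*t)) * pd (fun y => d y t 2) i x
      + (ε * Real.exp (γ*t)) * (2 * x i) = 0 := by
  have hlm : IsLocalMin (fun y : E2 => barφ K γ ε d (y, t)) x :=
    Filter.Eventually.of_forall (fun y => hmin y)
  have h0 := hlm.fderiv_eq_zero
  have h1 : pd (fun y : E2 => barφ K γ ε d (y, t)) i x = 0 := by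
    rw [pd, h0]; rfl
  have hb : (fun y : E2 => barφ K γ ε d (y, t))
      = fun y => Real.exp (-(K*t)) * d y t 2
        + (ε * Real.exp (γ*t)) * (1 + ∑ j, (y j)^2) := rfl
  rw [hb] at h1
  rw [← pd_phi (contDiff_slice_x hd3 t) (Real.exp (-(K*t)))
    (ε * Real.exp (γ*t)) i x, h1]

lemma barφ_lap (hd3 : ContDiff ℝ (⊤ : ℕ∞) (fun p : E2 × ℝ => d p.1 p.2 2))
    (x : E2) (t : ℝ)
    (hmin : ∀ y : E2, barφ K γ ε d (x, t) ≤ barφ K γ ε d (y, t)) :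
    0 ≤ Real.exp (-(K*t)) * lap (fun y => d y t 2) x
      + (ε * Real.exp (γ*t)) * 4 := by
  have key : ∀ i : Fin 2,
      0 ≤ Real.exp (-(K*t)) * pd (fun y => pd (fun z => d z t 2) i y) i x
          + (ε * Real.exp (γ*t)) * 2 := by
    intro i
    have h1 := lap_term_nonneg (contDiff_barφ_slice hd3 t) x i hmin
    have hb : (fun z : E2 => barφ K γ ε d (z, t))
        = fun z => Real.exp (-(K*t)) * d z t 2
          + (ε * Real.exp (γ*t)) * (1 + ∑ j, (z j)^2) := rfl
    rw [hb] at h1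
    rw [pd_pd_phi (contDiff_slice_x hd3 t) (Real.exp (-(K*t)))
      (ε * Real.exp (γ*t)) i x] at h1
    exact h1
  rw [lap, Fin.sum_univ_two]
  linarith [key 0, key 1]

lemma barφ_time (hd3 : ContDiff ℝ (⊤ : ℕ∞) (fun p : E2 × ℝ => d p.1 p.2 2))
    (x : E2) (t : ℝ) (ht : 0 < t)
    (hmin : ∀ s ∈ Set.Icc 0 t, barφ K γ ε d (x, t) ≤ barφ K γ ε d (x, s)) :
    Real.exp (-(K*t)) * (-K) * d x t 2
      + Real.exp (-(K*t)) * deriv (fun s => d x s 2) t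
      + (ε * (Real.exp (γ*t) * γ)) * (1 + ∑ j, (x j)^2) ≤ 0 := by
  have hFs : ContDiff ℝ (⊤ : ℕ∞) (fun s : ℝ => d x s 2) :=
    hd3.comp (contDiff_const.prodMk contDiff_id)
  have hE1 : HasDerivAt (fun s : ℝ => Real.exp (-(K*s)))
      (Real.exp (-(K*t)) * (-K)) t := by
    have := (((hasDerivAt_id t).const_mul K).neg).exp
    simpa using this
  have hF : HasDerivAt (fun s => d x s 2) (deriv (fun s => d x s 2) t) t :=
    (hFs.differentiable (by simp) t).hasDerivAt
  have hE2 : HasDerivAt (fun s : ℝ => (ε * Real.exp (γ*s)) * (1 + ∑ j, (x j)^2))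
      ((ε * (Real.exp (γ*t) * γ)) * (1 + ∑ j, (x j)^2)) t := by
    have h3 : HasDerivAt (fun s : ℝ => Real.exp (γ*s)) (Real.exp (γ*t) * γ) t := by
      have := ((hasDerivAt_id t).const_mul γ).exp
      simpa using this
    exact ((h3.const_mul ε).mul_const _)
  have htot := (hE1.mul hF).add hE2
  have := oneSided ht htot (fun s hs => hmin s hs)
  linarith [this]

end barphi

end Helpers

set_option maxHeartbeats 4000000 in
/-- **Maximum principle for the third director component.** Let `lam1 < 0`.
If `(u, d)` is a smooth solution of the Ericksen–Leslie director equation on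
`ℝ² × [0,T]`, with `|d| ≡ 1` and `|u|, |∇u|, |∇d|` bounded, and if
`d₃(·, 0) ≥ 0`, then `d₃ ≥ 0` on `ℝ² × [0,T]`. -/
theorem director_third_component_nonneg
    (μ2 μ3 μ5 μ6 lam1 lam2 : ℝ)
    (hlam1 : lam1 = μ2 - μ3) (hlam1neg : lam1 < 0) (hlam2 : lam2 = μ5 - μ6)
    (T : ℝ) (hT : 0 < T)
    (u : E2 → ℝ → Fin 2 → ℝ) (d : E2 → ℝ → Fin 3 → ℝ)
    (hu : ContDiff ℝ (⊤ : ℕ∞) (fun p : E2 × ℝ => u p.1 p.2))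
    (hd : ContDiff ℝ (⊤ : ℕ∞) (fun p : E2 × ℝ => d p.1 p.2))
    (hunit : ∀ x : E2, ∀ t ∈ Set.Icc (0 : ℝ) T, ∑ k, (d x t k) ^ 2 = 1)
    (hdirector : ∀ x : E2, ∀ t ∈ Set.Icc (0 : ℝ) T, ∀ k : Fin 3,
      deriv (fun s => d x s k) t + (∑ i, u x t i * pd (fun y => d y t k) i x)
        - emb (Odhat u d x t) k + (lam2 / lam1) * emb (Adhat u d x t) k
      = (1 / |lam1|) * (lap (fun y => d y t k) x + gradD2 d x t * d x t k)
        + (lam2 / lam1) * dAd u d x t * d x t k)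
    (hbound : ∃ M : ℝ, ∀ x : E2, ∀ t ∈ Set.Icc (0 : ℝ) T,
      Real.sqrt (∑ i, (u x t i) ^ 2) ≤ M ∧
      Real.sqrt (∑ i, ∑ j, (pd (fun y => u y t j) i x) ^ 2) ≤ M ∧
      Real.sqrt (gradD2 d x t) ≤ M)
    (hinit : ∀ x : E2, 0 ≤ d x 0 (2 : Fin 3)) :
    ∀ x : E2, ∀ t ∈ Set.Icc (0 : ℝ) T, 0 ≤ d x t (2 : Fin 3) := by
  intro x₀ t₀ ht₀
  by_contra hcon
  push_neg at hcon
  obtain ⟨M, hM⟩ := hbound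
  have hM0 : 0 ≤ M := le_trans (Real.sqrt_nonneg _) (hM x₀ t₀ ht₀).1
  have habs : 0 < |lam1| := abs_pos.2 (ne_of_lt hlam1neg)
  set ν : ℝ := 1/|lam1| with hνdef
  have hν : 0 < ν := by positivity
  set c : ℝ := lam2/lam1 with hcdef
  set K : ℝ := ν*M^2 + |c| * (4*M) with hKdef
  have hK0 : 0 ≤ K := by positivity
  set γ : ℝ := 2*M + 4*ν + 1 with hγdef
  have hγ0 : 0 < γ := by positivity
  have hq₀ : (0:ℝ) ≤ ∑ j, (x₀ j)^2 := by positivity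
  set ε : ℝ := (Real.exp (-(K*t₀)) * (-(d x₀ t₀ 2)))
      / (2 * Real.exp (γ*t₀) * (1 + ∑ j, (x₀ j)^2)) with hεdef
  have hε : 0 < ε := by
    apply div_pos
    · have := Real.exp_pos (-(K*t₀)); nlinarith
    · positivity
  set R : ℝ := ‖x₀‖ + 1/ε + 1 with hRdef
  have hεinv : (0:ℝ) < 1/ε := by positivity
  have hx₀n : (0:ℝ) ≤ ‖x₀‖ := norm_nonneg _
  have hR1 : 1 ≤ R := by rw [hRdef]; linarith
  have hRx₀ : ‖x₀‖ ≤ R := by rw [hRdef]; linarith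
  have hRε : 1/ε ≤ R := by rw [hRdef]; linarith
  clear_value ν c K γ ε R
  -- |d| ≤ 1 componentwise
  have hd1 : ∀ x : E2, ∀ t ∈ Set.Icc (0:ℝ) T, ∀ k : Fin 3, |d x t k| ≤ 1 := by
    intro x t ht k
    have h1 : (d x t k)^2 ≤ ∑ k', (d x t k')^2 :=
      Finset.single_le_sum (f := fun k' => (d x t k')^2)
        (fun k' _ => sq_nonneg _) (Finset.mem_univ k)
    rw [hunit x t ht] at h1
    rw [abs_le]
    constructor <;> nlinarith
  -- q = ‖·‖²
  have hqnorm : ∀ y : E2, ∑ j, (y j)^2 = ‖y‖^2 := by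
    intro y
    rw [EuclideanSpace.norm_eq, Real.sq_sqrt (by positivity)]
    congr 1
    funext j
    rw [Real.norm_eq_abs, sq_abs]
  -- outside the ball, barφ is positive
  have houtside : ∀ x : E2, ∀ t ∈ Set.Icc (0:ℝ) t₀, R ≤ ‖x‖ → 0 < barφ K γ ε d (x, t) := by
    intro x t ht hx
    have hqx : 1/ε ≤ ∑ j, (x j)^2 := by
      rw [hqnorm]
      generalize hnx : ‖x‖ = nx at hx ⊢
      have hR0 : (0:ℝ) ≤ R := by linarith
      have h1 : R * R ≤ nx * nx := mul_le_mul hx hx hR0 (by linarith)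
      nlinarith [h1, hRε, hR1]
    clear hx
    have htT : t ∈ Set.Icc (0:ℝ) T := ⟨ht.1, le_trans ht.2 ht₀.2⟩
    have hf : -1 ≤ d x t 2 := (abs_le.1 (hd1 x t htT 2)).1
    have he1 : Real.exp (-(K*t)) ≤ 1 := by
      apply Real.exp_le_one_iff.2
      nlinarith [mul_nonneg hK0 ht.1]
    have he1' : 0 < Real.exp (-(K*t)) := Real.exp_pos _
    have he2 : 1 ≤ Real.exp (γ*t) := by
      apply Real.one_le_exp
      nlinarith [mul_nonneg (le_of_lt hγ0) ht.1]
    have hεq : 1 ≤ ε * (∑ j, (x j)^2) := by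
      have h0 := mul_le_mul_of_nonneg_left hqx (le_of_lt hε)
      calc (1:ℝ) = ε * (1/ε) := (mul_one_div_cancel (ne_of_gt hε)).symm
        _ ≤ ε * (∑ j, (x j)^2) := h0
    have hterm1 : -1 ≤ Real.exp (-(K*t)) * d x t 2 := by nlinarith
    have hq0' : (0:ℝ) ≤ ∑ j, (x j)^2 := by positivity
    have hterm2 : 1 + ε ≤ (ε * Real.exp (γ*t)) * (1 + ∑ j, (x j)^2) := by
      have hb1 : (1:ℝ) * 1 ≤ (ε * (∑ j, (x j)^2)) * Real.exp (γ*t) :=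
        mul_le_mul hεq he2 zero_le_one (by positivity)
      have hb2 : ε * 1 ≤ ε * Real.exp (γ*t) :=
        mul_le_mul_of_nonneg_left he2 (le_of_lt hε)
      nlinarith [hb1, hb2]
    have hb : barφ K γ ε d (x, t) = Real.exp (-(K*t)) * d x t 2
        + (ε * Real.exp (γ*t)) * (1 + ∑ j, (x j)^2) := rfl
    rw [hb]
    linarith
  -- continuity of barφ
  have hd3 : ContDiff ℝ (⊤ : ℕ∞) (fun p : E2 × ℝ => d p.1 p.2 2) :=
    (ContinuousLinearMap.proj (R := ℝ) (φ := fun _ : Fin 3 => ℝ) 2).contDiff.comp hd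
  have hφcont : Continuous (barφ K γ ε d) := by
    unfold barφ
    apply Continuous.add
    · exact (Real.continuous_exp.comp (continuous_const.mul continuous_snd).neg).mul
        (hd3.continuous)
    · apply Continuous.mul
      · exact continuous_const.mul (Real.continuous_exp.comp (continuous_const.mul continuous_snd))
      · apply Continuous.add continuous_const
        apply continuous_finset_sum
        intro j _
        exact ((EuclideanSpace.proj (𝕜 := ℝ) j).continuous.comp continuous_fst).pow 2
  -- compact minimization
  have hScomp : IsCompact ((Metric.closedBall (0:E2) R) ×ˢ (Set.Icc (0:ℝ) t₀)) :=
    (isCompact_closedBall _ _).prod isCompact_Icc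
  have hSne : ((Metric.closedBall (0:E2) R) ×ˢ (Set.Icc (0:ℝ) t₀)).Nonempty :=
    ⟨(x₀, t₀), ⟨mem_closedBall_zero_iff.2 hRx₀, ⟨ht₀.1, le_refl _⟩⟩⟩
  obtain ⟨⟨x', t'⟩, ⟨hx'S0, ht'S0⟩, hmin⟩ :=
    hScomp.exists_isMinOn hSne hφcont.continuousOn
  have hx'S : x' ∈ Metric.closedBall (0:E2) R := hx'S0
  have ht'S : t' ∈ Set.Icc (0:ℝ) t₀ := ht'S0
  clear hx'S0 ht'S0
  have hmin' : ∀ p ∈ ((Metric.closedBall (0:E2) R) ×ˢ (Set.Icc (0:ℝ) t₀)),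
      barφ K γ ε d (x', t') ≤ barφ K γ ε d p := fun p hp => hmin hp
  rw [mem_closedBall_zero_iff] at hx'S
  -- the value at (x₀,t₀) is negative
  have hstart : barφ K γ ε d (x₀, t₀) < 0 := by
    have hb : barφ K γ ε d (x₀, t₀) = Real.exp (-(K*t₀)) * d x₀ t₀ 2
        + (ε * Real.exp (γ*t₀)) * (1 + ∑ j, (x₀ j)^2) := rfl
    have h2 : (ε * Real.exp (γ*t₀)) * (1 + ∑ j, (x₀ j)^2)
        = Real.exp (-(K*t₀)) * (-(d x₀ t₀ 2)) / 2 := by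
      rw [hεdef]
      have hpos : (0:ℝ) < Real.exp (γ*t₀) := Real.exp_pos _
      have hq1 : (0:ℝ) < 1 + ∑ j, (x₀ j)^2 := by positivity
      field_simp
    rw [hb, h2]
    have := Real.exp_pos (-(K*t₀))
    nlinarith
  have hφneg : barφ K γ ε d (x', t') < 0 :=
    lt_of_le_of_lt (hmin' (x₀, t₀) ⟨mem_closedBall_zero_iff.2 hRx₀, ⟨ht₀.1, le_refl _⟩⟩) hstart
  -- strict interior in space
  have hx'lt : ‖x'‖ < R := by
    by_contra h
    push_neg at h
    exact absurd hφneg (not_lt.2 (le_of_lt (houtside x' t' ht'S h)))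
  -- t' > 0
  have ht'pos : 0 < t' := by
    rcases eq_or_lt_of_le ht'S.1 with h | h
    · exfalso
      have hb : barφ K γ ε d (x', t') = Real.exp (-(K*t')) * d x' t' 2
          + (ε * Real.exp (γ*t')) * (1 + ∑ j, (x' j)^2) := rfl
      rw [hb, ← h] at hφneg
      simp only [mul_zero, neg_zero, Real.exp_zero, one_mul, mul_one] at hφneg
      have hinit' := hinit x'
      have h9 : (0:ℝ) ≤ ∑ j, (x' j)^2 := by positivity
      clear hmin hmin' hstart houtside hqnorm hRx₀ hx₀n hεinv hR1 hRε hx'S hRdef hScomp hSne hφcont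
      nlinarith [hinit', h9, hε]
    · exact h
  have ht'T : t' ∈ Set.Icc (0:ℝ) T := ⟨ht'S.1, le_trans ht'S.2 ht₀.2⟩
  -- global spatial minimum
  have hxglobal : ∀ y : E2, barφ K γ ε d (x', t') ≤ barφ K γ ε d (y, t') := by
    intro y
    by_cases h : ‖y‖ ≤ R
    · exact hmin' (y, t') ⟨mem_closedBall_zero_iff.2 h, ht'S⟩
    · push_neg at h
      exact le_of_lt (lt_trans hφneg (houtside y t' ht'S (le_of_lt h)))
  -- time minimum
  have htmin : ∀ s ∈ Set.Icc (0:ℝ) t', barφ K γ ε d (x', t') ≤ barφ K γ ε d (x', s) := by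
    intro s hs
    exact hmin' (x', s) ⟨mem_closedBall_zero_iff.2 (le_of_lt hx'lt),
      ⟨hs.1, le_trans hs.2 ht'S.2⟩⟩
  clear hmin hmin' hstart houtside hqnorm hRx₀ hx₀n hεinv hR1 hRε hx'S hx'lt hRdef hScomp hSne hφcont
  -- derivative information
  have hgrad := fun i => barφ_grad hd3 x' t' hxglobal i
  have hlap := barφ_lap hd3 x' t' hxglobal
  have htime := barφ_time hd3 x' t' ht'pos htmin
  -- the PDE at (x', t')
  have hPDE := hdirector x' t' ht'T 2
  have hemb : ∀ v : Fin 2 → ℝ, emb v 2 = 0 := by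
    intro v
    simp [emb]
  rw [hemb, hemb, Fin.sum_univ_two] at hPDE
  -- bounds at (x', t')
  obtain ⟨hMu, hMgu, hMgd⟩ := hM x' t' ht'T
  have husq : ∑ i, (u x' t' i)^2 ≤ M^2 := by
    nlinarith [Real.sq_sqrt (by positivity : (0:ℝ) ≤ ∑ i, (u x' t' i)^2),
      Real.sqrt_nonneg (∑ i, (u x' t' i)^2)]
  have hui : ∀ i : Fin 2, |u x' t' i| ≤ M := by
    intro i
    have h1 : (u x' t' i)^2 ≤ ∑ i', (u x' t' i')^2 :=
      Finset.single_le_sum (f := fun i' => (u x' t' i')^2)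
        (fun i' _ => sq_nonneg _) (Finset.mem_univ i)
    rw [abs_le]; constructor <;> nlinarith
  have hgusq : ∑ i, ∑ j, (pd (fun y => u y t' j) i x')^2 ≤ M^2 := by
    nlinarith [Real.sq_sqrt (by positivity :
        (0:ℝ) ≤ ∑ i, ∑ j, (pd (fun y => u y t' j) i x')^2),
      Real.sqrt_nonneg (∑ i, ∑ j, (pd (fun y => u y t' j) i x')^2)]
  have hgu : ∀ i j : Fin 2, |pd (fun y => u y t' j) i x'| ≤ M := by
    intro i j
    have h1 : (pd (fun y => u y t' j) i x')^2 ≤ ∑ j', (pd (fun y => u y t' j') i x')^2 :=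
      Finset.single_le_sum (f := fun j' => (pd (fun y => u y t' j') i x')^2)
        (fun j' _ => sq_nonneg _) (Finset.mem_univ j)
    have h2 : ∑ j', (pd (fun y => u y t' j') i x')^2
        ≤ ∑ i', ∑ j', (pd (fun y => u y t' j') i' x')^2 :=
      Finset.single_le_sum (f := fun i' => ∑ j', (pd (fun y => u y t' j') i' x')^2)
        (fun i' _ => Finset.sum_nonneg (fun j' _ => sq_nonneg _))
        (Finset.mem_univ i)
    rw [abs_le]; constructor <;> nlinarith
  have hAm : ∀ i j : Fin 2, |Amat u x' t' i j| ≤ M := by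
    intro i j
    rw [Amat]
    have h1 := abs_le.1 (hgu i j)
    have h2 := abs_le.1 (hgu j i)
    rw [abs_le]
    constructor <;> [linarith [h1.1, h2.1]; linarith [h1.2, h2.2]]
  have hdh : ∀ i : Fin 2, |dhat d x' t' i| ≤ 1 := by
    intro i
    rw [dhat]
    exact hd1 x' t' ht'T _
  have hdAd : |dAd u d x' t'| ≤ 4*M := by
    have habc : ∀ i j : Fin 2, |Amat u x' t' i j * dhat d x' t' i * dhat d x' t' j| ≤ M := by
      intro i j
      rw [abs_mul, abs_mul]
      have h1 := hAm i j
      have h2 := hdh i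
      have h3 := hdh j
      have h4 := abs_nonneg (Amat u x' t' i j)
      have h5 := abs_nonneg (dhat d x' t' i)
      have h6 := abs_nonneg (dhat d x' t' j)
      have hM0' : 0 ≤ M := le_trans h4 h1
      have s1 : |Amat u x' t' i j| * |dhat d x' t' i| ≤ M * 1 :=
        mul_le_mul h1 h2 h5 hM0'
      have s2 : |Amat u x' t' i j| * |dhat d x' t' i| * |dhat d x' t' j| ≤ M * 1 :=
        mul_le_mul (by linarith [s1]) h3 h6 hM0'
      linarith [s2]
    rw [dAd, Fin.sum_univ_two, Fin.sum_univ_two, Fin.sum_univ_two]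
    have h1 := abs_le.1 (habc 0 0)
    have h2 := abs_le.1 (habc 0 1)
    have h3 := abs_le.1 (habc 1 0)
    have h4 := abs_le.1 (habc 1 1)
    rw [abs_le]
    constructor
    · linarith [h1.1, h2.1, h3.1, h4.1]
    · linarith [h1.2, h2.2, h3.2, h4.2]
  have hG0 : 0 ≤ gradD2 d x' t' := by
    rw [gradD2]
    positivity
  have hGM : gradD2 d x' t' ≤ M^2 := by
    nlinarith [Real.sq_sqrt hG0, Real.sqrt_nonneg (gradD2 d x' t')]
  have hu0a := abs_le.1 (hui 0)
  have hu1a := abs_le.1 (hui 1)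
  -- gradient equations
  have hg0 := hgrad 0
  have hg1 := hgrad 1
  -- abbreviations (rewriting all hypotheses)
  set A : ℝ := Real.exp (-(K*t')) with hAdef
  set B : ℝ := Real.exp (γ*t') with hBdef
  have hA : 0 < A := Real.exp_pos _
  have hB : 0 < B := Real.exp_pos _
  set f' : ℝ := d x' t' 2 with hf'def
  set Q : ℝ := 1 + ∑ j, (x' j)^2 with hQdef
  set L : ℝ := lap (fun y => d y t' 2) x' with hLdef
  set dF : ℝ := deriv (fun s => d x' s 2) t' with hdFdef
  set p0 : ℝ := pd (fun y => d y t' 2) 0 x' with hp0def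
  set p1 : ℝ := pd (fun y => d y t' 2) 1 x' with hp1def
  set G : ℝ := gradD2 d x' t' with hGdef
  set D : ℝ := dAd u d x' t' with hDdef
  set u0 : ℝ := u x' t' 0 with hu0def
  set u1 : ℝ := u x' t' 1 with hu1def
  set X0 : ℝ := x' 0 with hX0def
  set X1 : ℝ := x' 1 with hX1def
  have hQ1 : 1 ≤ Q := by
    have h0 : (0:ℝ) ≤ ∑ j, (x' j)^2 := by positivity
    rw [hQdef]; linarith
  have hQeq : Q = 1 + (X0^2 + X1^2) := by
    rw [hQdef, Fin.sum_univ_two, hX0def, hX1def]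
  have hεB : 0 < ε * B := mul_pos hε hB
  -- f' < 0
  have hf'neg : f' < 0 := by
    have hb : barφ K γ ε d (x', t') = A * f' + (ε * B) * Q := rfl
    rw [hb] at hφneg
    by_contra hcon'
    push_neg at hcon'
    have h1 : 0 ≤ A * f' := mul_nonneg (le_of_lt hA) hcon'
    have h2 : 0 < (ε*B) * Q := mul_pos hεB (by linarith)
    linarith only [h1, h2, hφneg]
  clear_value A B f' Q L dF p0 p1 G D u0 u1 X0 X1
  clear hu hd hunit hdirector hinit hd1 hφneg hxglobal htmin hgrad hui hgu hAm hdh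
    husq hgusq hd3 hMu hMgu hMgd hε hcon ht₀ hT hεdef
  -- PDE in scalar form
  have hPDE' : dF + (u0 * p0 + u1 * p1) = ν * (L + G * f') + c * D * f' := by
    linarith only [hPDE]
  clear hPDE
  -- transport bounds
  have hx0b : -(M * (1 + X0^2)) ≤ 2 * (u0 * X0) := by
    have c1 : 0 ≤ (M + u0) * (1 + X0)^2 :=
      mul_nonneg (by linarith [hu0a.1]) (sq_nonneg _)
    have c2 : 0 ≤ (M - u0) * (1 - X0)^2 :=
      mul_nonneg (by linarith [hu0a.2]) (sq_nonneg _)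
    nlinarith only [c1, c2]
  have hx1b : -(M * (1 + X1^2)) ≤ 2 * (u1 * X1) := by
    have c1 : 0 ≤ (M + u1) * (1 + X1)^2 :=
      mul_nonneg (by linarith [hu1a.1]) (sq_nonneg _)
    have c2 : 0 ≤ (M - u1) * (1 - X1)^2 :=
      mul_nonneg (by linarith [hu1a.2]) (sq_nonneg _)
    nlinarith only [c1, c2]
  -- zeroth order bound
  have hzero : 0 ≤ (ν * G + c * D - K) * f' := by
    have h1 : ν * G ≤ ν * M^2 := mul_le_mul_of_nonneg_left hGM (le_of_lt hν)
    have h2 : c * D ≤ |c| * (4*M) := by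
      calc c * D ≤ |c * D| := le_abs_self _
        _ = |c| * |D| := abs_mul _ _
        _ ≤ |c| * (4*M) := mul_le_mul_of_nonneg_left hdAd (abs_nonneg _)
    have h3 : ν * G + c * D - K ≤ 0 := by
      rw [hKdef]
      linarith
    have h4 := mul_nonneg (neg_nonneg.2 h3) (neg_nonneg.2 (le_of_lt hf'neg))
    nlinarith only [h4]
  have hzero' : 0 ≤ (ν * G + c * D) * (A * f') - K * (A * f') := by
    have h5 := mul_nonneg (le_of_lt hA) hzero
    nlinarith only [h5]
  -- transport term identity
  have htrans : A * (u0 * p0 + u1 * p1)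
      = -((ε*B) * (2 * (u0 * X0) + 2 * (u1 * X1))) := by
    linear_combination u0 * hg0 + u1 * hg1
  -- multiply PDE through by A
  have hkey : A * dF = ν * (A * L) + (ν * G + c * D) * (A * f')
      + (ε*B) * (2 * (u0 * X0) + 2 * (u1 * X1)) := by
    linear_combination A * hPDE' - htrans
  -- Laplacian bound
  have hlap' : -(ν * ((ε * B) * 4)) ≤ ν * (A * L) := by
    have h5 := mul_nonneg (le_of_lt hν) hlap
    nlinarith only [h5]
  -- transport bound assembled
  have htransb : -((ε*B) * (M * (1 + Q))) ≤ (ε*B) * (2 * (u0 * X0) + 2 * (u1 * X1)) := by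
    have hMQ : M * (1 + Q) = M * (2 + (X0^2 + X1^2)) := by rw [hQeq]; ring
    have h6 : -(M * (1 + Q)) ≤ 2 * (u0 * X0) + 2 * (u1 * X1) := by
      linarith only [hx0b, hx1b, hMQ]
    have h7 := mul_le_mul_of_nonneg_left h6 (le_of_lt hεB)
    nlinarith only [h7]
  -- time inequality with γ substituted
  have htime2 : A * (-K) * f' + A * dF + (ε * (B * (2*M + 4*ν + 1))) * Q ≤ 0 := by
    rw [hγdef] at htime
    exact htime
  -- positivity slack terms
  have c1 : 0 ≤ (ε*B) * (M * (Q - 1)) :=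
    mul_nonneg (le_of_lt hεB) (mul_nonneg hM0 (by linarith))
  have c2 : 0 ≤ (ε*B) * (ν * (Q - 1)) :=
    mul_nonneg (le_of_lt hεB) (mul_nonneg (le_of_lt hν) (by linarith))
  have c3 : ε*B ≤ (ε*B) * Q := by
    have h8 := mul_le_mul_of_nonneg_left hQ1 (le_of_lt hεB)
    nlinarith only [h8]
  linarith only [htime2, hkey, hlap', htransb, hzero', c1, c2, c3, hεB]
end
end
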